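/- Let y_0 be a real number such that y_0 ≠ φ and y_0 ≠ F_{m+1}/F_m for every integer m ≥ 1, and let (y_n)_{n≥0} satisfy y_{n+1} = 1/(-1 + y_n) for all n ≥ 0. Then the sequence (y_n) converges to 1 - φ. -/

import Mathlib

/-!
The map `x ↦ 1 / (x - 1)` is a Möbius transformation whose fixed points are the roots `φ` and
`ψ = 1 - φ` of `t² = t + 1`; in the coordinate `z = (x - ψ) / (x - φ)` it acts as multiplication
by `ψ / φ`, which has modulus `< 1`. Hence `z_n → 0`, i.e. `y_n → ψ`, provided the orbit never
sits at `φ` (where `z` is undefined) nor hits the pole `1`. Since `x` is recovered from its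
image `r` as `1 + r⁻¹`, both conditions propagate forward from `y₀`: `φ` is its own preimage,
and the backward orbit of `1` is the set of Fibonacci ratios `F_{m+1} / F_m`.
-/

open Filter Topology Real goldenRatio

lemma forall_not_of_backward_closed {α : Type*} {P : α → Prop} {f : α → α} {y : ℕ → α}
    (hP : ∀ x, P (f x) → P x) (hy : ∀ n, y (n + 1) = f (y n)) (h0 : ¬ P (y 0)) :
    ∀ n, ¬ P (y n) := by
  intro n
  induction n with
  | zero => exact h0
  | succ n ih => rw [hy n]; exact fun h => ih (hP _ h)

section Field

variable {K : Type*} [Field K]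

lemma eq_one_add_inv_of_one_div_neg_one_add_eq {x r : K} (h : 1 / (-1 + x) = r) :
    x = 1 + r⁻¹ := by
  rw [← h, one_div, inv_inv]
  ring

lemma one_add_inv_fib_succ_div_fib [CharZero K] (m : ℕ) :
    1 + ((Nat.fib (m + 1) : K) / Nat.fib m)⁻¹ = Nat.fib (m + 2) / Nat.fib (m + 1) := by
  have hm : (Nat.fib (m + 1) : K) ≠ 0 := by exact_mod_cast (Nat.fib_pos.mpr m.succ_pos).ne'
  rw [inv_div, Nat.fib_add_two, Nat.cast_add]
  field_simp
  ring

lemma one_div_neg_one_add_sub_div_sub {a b x : K} (ha : a ^ 2 = a + 1) (hb : b ^ 2 = b + 1)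
    (hx : x ≠ 1) :
    (1 / (-1 + x) - a) / (1 / (-1 + x) - b) = a / b * ((x - a) / (x - b)) := by
  have hx' : -1 + x ≠ 0 := fun h => hx (by linear_combination h)
  have hb0 : b ≠ 0 := by rintro rfl; norm_num at hb
  have hsub (c : K) (hc : c ^ 2 = c + 1) : 1 / (-1 + x) - c = -c * (x - c) / (-1 + x) := by
    field_simp
    linear_combination -hc
  rw [hsub a ha, hsub b hb, div_div_div_cancel_right₀ hx', neg_mul, neg_mul, neg_div_neg_eq,
    mul_div_mul_comm]

end Field

section NormedField

variable {K : Type*} [NormedField K]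

lemma tendsto_zero_of_succ_eq_mul {c : K} (hc : ‖c‖ < 1) {u : ℕ → K}
    (hu : ∀ n, u (n + 1) = c * u n) : Tendsto u atTop (𝓝 0) := by
  have hpow : ∀ n, u n = c ^ n * u 0 := by
    intro n
    induction n with
    | zero => simp
    | succ n ih => rw [hu n, ih]; ring
  simpa [← funext hpow] using (tendsto_pow_atTop_nhds_zero_of_norm_lt_one hc).mul_const (u 0)

lemma tendsto_of_tendsto_div_sub_div_sub {ι : Type*} {l : Filter ι} {a b : K} (hab : a ≠ b)
    {y : ι → K} (hb : ∀ᶠ i in l, y i ≠ b)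
    (h : Tendsto (fun i => (y i - a) / (y i - b)) l (𝓝 0)) : Tendsto y l (𝓝 a) := by
  have hlim : Tendsto (fun i => (a - b * ((y i - a) / (y i - b))) / (1 - (y i - a) / (y i - b)))
      l (𝓝 ((a - b * 0) / (1 - 0))) :=
    (tendsto_const_nhds.sub (h.const_mul b)).div (tendsto_const_nhds.sub h) (by simp)
  rw [mul_zero, sub_zero, sub_zero, div_one] at hlim
  refine hlim.congr' (hb.mono fun i hi => ?_)
  have hyb : y i - b ≠ 0 := sub_ne_zero.mpr hi
  have hab' : y i - b - (y i - a) ≠ 0 := by rwa [sub_sub_sub_cancel_left, sub_ne_zero]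
  rw [one_sub_div hyb, div_div_eq_mul_div, div_eq_iff hab']
  field_simp
  ring

end NormedField

lemma abs_goldenConj_div_goldenRatio_lt_one : |ψ / φ| < 1 := by
  rw [abs_div, abs_of_neg goldenConj_neg, abs_of_pos goldenRatio_pos, div_lt_one goldenRatio_pos]
  linarith [neg_one_lt_goldenConj, one_lt_goldenRatio]

theorem stmt_16 (y : ℕ → ℝ)
    (h0 : y 0 ≠ (1 + Real.sqrt 5) / 2)
    (h0' : ∀ m : ℕ, 1 ≤ m → y 0 ≠ (Nat.fib (m + 1) : ℝ) / (Nat.fib m : ℝ))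
    (hrec : ∀ n : ℕ, y (n + 1) = 1 / (-1 + y n)) :
    Filter.Tendsto y Filter.atTop (nhds (1 - (1 + Real.sqrt 5) / 2)) := by
  have hφ : ∀ n, y n ≠ φ :=
    forall_not_of_backward_closed (P := (· = φ)) (f := fun x => 1 / (-1 + x))
      (fun x hx => by rw [eq_one_add_inv_of_one_div_neg_one_add_eq hx, inv_goldenRatio,
        ← sub_eq_add_neg, one_sub_goldenRatio]) hrec h0
  have hfib : ∀ n, ¬ ∃ m, 1 ≤ m ∧ y n = Nat.fib (m + 1) / Nat.fib m :=
    forall_not_of_backward_closed (P := fun x : ℝ => ∃ m, 1 ≤ m ∧ x = Nat.fib (m + 1) / Nat.fib m)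
      (f := fun x => 1 / (-1 + x)) (fun x ⟨m, _, hx⟩ => ⟨m + 1, m.succ_pos, by
      rw [eq_one_add_inv_of_one_div_neg_one_add_eq hx, one_add_inv_fib_succ_div_fib]⟩)
      hrec (fun ⟨m, hm, h⟩ => h0' m hm h)
  have h1 : ∀ n, y n ≠ 1 := fun n h => hfib n ⟨1, le_rfl, by simp [h]⟩
  have hz : Tendsto (fun n => (y n - ψ) / (y n - φ)) atTop (𝓝 0) :=
    tendsto_zero_of_succ_eq_mul (by simpa using abs_goldenConj_div_goldenRatio_lt_one) fun n => by
      rw [hrec, one_div_neg_one_add_sub_div_sub goldenConj_sq goldenRatio_sq (h1 n)]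
  rw [show 1 - (1 + √5) / 2 = ψ from one_sub_goldenConj]
  exact tendsto_of_tendsto_div_sub_div_sub (by linarith [goldenConj_neg, goldenRatio_pos])
    (Eventually.of_forall hφ) hz
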